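/- Let c > 0, let r > 0, let t ∈ ℝ, and let λ : ℝ → ℝ be continuous with compact support. Then the function τ ↦ λ(τ) / (2π √((t − τ)² − c⁻²r²)) is integrable on the interval (−∞, t − c⁻¹r), and consequently the time convolution of the two-dimensional Green's function with λ, (G₂(x,·;y) ∗ λ)(t) = ∫_ℝ H(t − τ − c⁻¹‖x − y‖) λ(τ) / (2π √((t − τ)² − c⁻²‖x − y‖²)) dτ with r = ‖x − y‖, is well defined and equals ∫_{−∞}^{t − c⁻¹r} λ(τ) / (2π √((t − τ)² − c⁻²r²)) dτ. -/

import Mathlib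

/-!
On the light cone `s > a = c⁻¹r` the factorisation `s² - a² = (s - a)(s + a) ≥ 2a(s - a)` bounds
the kernel `1/√(s² - a²)` by a multiple of `(s - a)^(-1/2)`, which is integrable at `a`. Hence the
Green's function `G₂` is locally integrable in time, so its convolution with a continuous compactly
supported `λ` exists; the Heaviside factor turns the convolution integral into the integral over
`(-∞, t - a)`.
-/

open MeasureTheory Real

/-- The Heaviside function: `H(t) = 1` for `t > 0` and `H(t) = 0` for `t ≤ 0`. -/
noncomputable def heaviside (t : ℝ) : ℝ := if 0 < t then 1 else 0

open Set

theorem heaviside_sub_mul_eq_indicator_Ioi (a : ℝ) (f : ℝ → ℝ) :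
    (fun s => heaviside (s - a) * f s) = (Ioi a).indicator f := by
  ext s
  by_cases hs : a < s <;> simp [heaviside, indicator, hs]

theorem heaviside_sub_sub_mul_eq_indicator_Iio (t a : ℝ) (f : ℝ → ℝ) :
    (fun τ => heaviside (t - τ - a) * f τ) = (Iio (t - a)).indicator f := by
  ext τ
  by_cases hτ : τ < t - a
  · simp [heaviside, indicator, hτ, show 0 < t - τ - a by linarith]
  · simp [heaviside, indicator, hτ, show ¬ 0 < t - τ - a by linarith]

theorem locallyIntegrable_indicator_Ioi {E : Type*} [NormedAddCommGroup E] {f : ℝ → E} {a : ℝ}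
    (hf : ∀ b, IntegrableOn f (Ioc a b)) : LocallyIntegrable ((Ioi a).indicator f) := by
  refine (locallyIntegrable_iff (μ := volume)).2 fun K hK => ?_
  obtain ⟨b, hb⟩ := hK.bddAbove
  rw [integrableOn_indicator_iff measurableSet_Ioi]
  exact (hf b).mono_set fun s hs => ⟨hs.1, hb hs.2⟩

theorem inv_sqrt_sq_sub_sq_le {a s : ℝ} (ha : 0 < a) (hs : a < s) :
    (√(s ^ 2 - a ^ 2))⁻¹ ≤ (√(2 * a))⁻¹ * (s - a) ^ (-(1 / 2 : ℝ)) := by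
  have hsa : 0 < s - a := sub_pos.2 hs
  have hfactor : 2 * a * (s - a) ≤ s ^ 2 - a ^ 2 := by nlinarith
  calc (√(s ^ 2 - a ^ 2))⁻¹ ≤ (√(2 * a * (s - a)))⁻¹ :=
        inv_anti₀ (by positivity) (sqrt_le_sqrt hfactor)
    _ = (√(2 * a))⁻¹ * (s - a) ^ (-(1 / 2 : ℝ)) := by
        rw [sqrt_mul (by positivity), mul_inv, rpow_neg hsa.le, ← sqrt_eq_rpow]

theorem integrableOn_Ioc_inv_sqrt_sq_sub_sq {a : ℝ} (ha : 0 < a) (b : ℝ) :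
    IntegrableOn (fun s => (√(s ^ 2 - a ^ 2))⁻¹) (Ioc a b) := by
  have hmajorant : IntegrableOn (fun s => (√(2 * a))⁻¹ * (s - a) ^ (-(1 / 2 : ℝ))) (Ioc a b) := by
    have h := (intervalIntegral.intervalIntegrable_rpow' (r := -(1 / 2 : ℝ)) (a := 0) (b := b - a)
      (by norm_num)).comp_sub_right a
    simp only [zero_add, sub_add_cancel] at h
    exact (h.def'.mono_set Ioc_subset_uIoc).const_mul _
  refine hmajorant.mono' (by fun_prop) ?_
  filter_upwards [ae_restrict_mem measurableSet_Ioc] with s hs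
  rw [norm_inv, norm_of_nonneg (sqrt_nonneg _)]
  exact inv_sqrt_sq_sub_sq_le ha hs.1

/-- The two-dimensional Green's function `G₂(x, s; y)` as a function of the time `s`,
with `r = ‖x - y‖`. -/
noncomputable def greenFunction2 (c r s : ℝ) : ℝ :=
  heaviside (s - c⁻¹ * r) / (2 * π * √(s ^ 2 - c⁻¹ ^ 2 * r ^ 2))

theorem greenFunction2_eq_indicator (c r : ℝ) :
    greenFunction2 c r =
      (Ioi (c⁻¹ * r)).indicator fun s => (2 * π)⁻¹ * (√(s ^ 2 - (c⁻¹ * r) ^ 2))⁻¹ := by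
  rw [← heaviside_sub_mul_eq_indicator_Ioi]
  ext s
  rw [greenFunction2, mul_pow, div_eq_mul_inv, mul_inv]

theorem locallyIntegrable_greenFunction2 {c r : ℝ} (hc : 0 < c) (hr : 0 < r) :
    LocallyIntegrable (greenFunction2 c r) := by
  rw [greenFunction2_eq_indicator]
  exact locallyIntegrable_indicator_Ioi fun b =>
    (integrableOn_Ioc_inv_sqrt_sq_sub_sq (by positivity) b).const_mul _

/-- for a continuous, compactly supported signal `λ`, the kernel
`τ ↦ λ(τ)/(2π√((t − τ)² − c⁻²r²))` is integrable on `(−∞, t − c⁻¹r)`, and the time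
convolution of the 2D Green's function with `λ` is well defined and equals
`∫_{−∞}^{t − c⁻¹r} λ(τ)/(2π√((t − τ)² − c⁻²r²)) dτ`. -/
theorem stmt_10 (c : ℝ) (hc : 0 < c) (r : ℝ) (hr : 0 < r) (t : ℝ)
    (lam : ℝ → ℝ) (hcont : Continuous lam) (hsupp : HasCompactSupport lam) :
    IntegrableOn (fun τ => lam τ / (2 * Real.pi * Real.sqrt ((t - τ) ^ 2 - c⁻¹ ^ 2 * r ^ 2)))
        (Set.Iio (t - c⁻¹ * r)) ∧
      Integrable (fun τ => heaviside (t - τ - c⁻¹ * r) *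
          (lam τ / (2 * Real.pi * Real.sqrt ((t - τ) ^ 2 - c⁻¹ ^ 2 * r ^ 2)))) ∧
      (∫ τ : ℝ, heaviside (t - τ - c⁻¹ * r) *
          (lam τ / (2 * Real.pi * Real.sqrt ((t - τ) ^ 2 - c⁻¹ ^ 2 * r ^ 2)))) =
        ∫ τ in Set.Iio (t - c⁻¹ * r),
          lam τ / (2 * Real.pi * Real.sqrt ((t - τ) ^ 2 - c⁻¹ ^ 2 * r ^ 2)) := by
  have hconv : ConvolutionExistsAt lam (greenFunction2 c r) t (ContinuousLinearMap.lsmul ℝ ℝ) :=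
    hsupp.convolutionExists_left _ hcont (locallyIntegrable_greenFunction2 hc hr) t
  have hint : Integrable (fun τ => heaviside (t - τ - c⁻¹ * r) *
      (lam τ / (2 * π * √((t - τ) ^ 2 - c⁻¹ ^ 2 * r ^ 2)))) := by
    simpa only [ConvolutionExistsAt, ContinuousLinearMap.lsmul_apply, smul_eq_mul, greenFunction2,
      mul_div_left_comm] using hconv
  rw [heaviside_sub_sub_mul_eq_indicator_Iio] at hint ⊢
  exact ⟨(integrable_indicator_iff measurableSet_Iio).1 hint, hint,
    integral_indicator measurableSet_Iio⟩
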